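/- Let A ∈ ℝ^{r×r} be symmetric and let f(w) = σ₁(Q(w)) where Q(w) = (1/N) Pᵀ diag(T∘w − 1) G_h diag(T∘w − 1) P − Nλ₁D^{−1}, σ₁ denotes the maximum eigenvalue, G_h is positive semidefinite, and P, D, λ₁, T are fixed. Then f is convex in w. -/

import Mathlib

open Matrix

lemma psd_quad_ineq {n : ℕ} {G : Matrix (Fin n) (Fin n) ℝ} (hG : G.PosSemidef)
    (x y : Fin n → ℝ) {a b : ℝ} (ha : 0 ≤ a) (hb : 0 ≤ b) (hab : a + b = 1) :
    (a • x + b • y) ⬝ᵥ (G *ᵥ (a • x + b • y)) ≤ a * (x ⬝ᵥ (G *ᵥ x)) + b * (y ⬝ᵥ (G *ᵥ y)) := by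
  have hsym : x ⬝ᵥ (G *ᵥ y) = y ⬝ᵥ (G *ᵥ x) := by
    rw [dotProduct_mulVec, ← mulVec_transpose]
    have hGt : Gᵀ = G := by
      have := hG.isHermitian
      rw [Matrix.IsHermitian, conjTranspose_eq_transpose_of_trivial] at this; exact this
    rw [hGt, dotProduct_comm]
  have h0 : 0 ≤ (x - y) ⬝ᵥ (G *ᵥ (x - y)) := by
    have := hG.re_dotProduct_nonneg (x - y)
    simpa using this
  have hb1 : b = 1 - a := by linarith
  subst hb1
  simp only [mulVec_add, mulVec_smul, mulVec_sub, dotProduct_add, add_dotProduct,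
    dotProduct_smul, smul_dotProduct, dotProduct_sub, sub_dotProduct, smul_eq_mul, hsym] at *
  nlinarith [mul_nonneg (mul_nonneg ha hb) h0]

lemma rayleigh_le {r : ℕ} (hr : 0 < r) {A : Matrix (Fin r) (Fin r) ℝ} (hA : A.IsHermitian)
    (x : Fin r → ℝ) (hx : x ⬝ᵥ x = 1) :
    x ⬝ᵥ (A *ᵥ x) ≤ ⨆ i, hA.eigenvalues i := by
  haveI : Nonempty (Fin r) := ⟨⟨0, hr⟩⟩
  obtain ⟨U, hU⟩ : ∃ U : Matrix (Fin r) (Fin r) ℝ,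
      U = (hA.eigenvectorUnitary : Matrix (Fin r) (Fin r) ℝ) := ⟨_, rfl⟩
  have hstar : (star U : Matrix (Fin r) (Fin r) ℝ) = Uᵀ := by
    ext i j; simp [hU, conjTranspose_apply]
  have hUU : U * Uᵀ = 1 := by
    rw [← hstar, hU]; exact Matrix.mem_unitaryGroup_iff.mp hA.eigenvectorUnitary.2
  have hdiag : A = U * diagonal hA.eigenvalues * Uᵀ := by
    rw [← hstar, hU]
    have := hA.spectral_theorem
    simpa using this
  have h1 : x ⬝ᵥ (A *ᵥ x) = (Uᵀ *ᵥ x) ⬝ᵥ (diagonal hA.eigenvalues *ᵥ (Uᵀ *ᵥ x)) := by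
    conv_lhs => rw [hdiag]
    rw [← mulVec_mulVec, ← mulVec_mulVec, dotProduct_mulVec, ← mulVec_transpose]
  have h2 : (Uᵀ *ᵥ x) ⬝ᵥ (Uᵀ *ᵥ x) = 1 := by
    rw [dotProduct_mulVec, ← mulVec_transpose, mulVec_mulVec, transpose_transpose, hUU,
      one_mulVec, hx]
  rw [h1]
  have hbdd : BddAbove (Set.range hA.eigenvalues) := Set.Finite.bddAbove (Set.finite_range _)
  calc (Uᵀ *ᵥ x) ⬝ᵥ (diagonal hA.eigenvalues *ᵥ (Uᵀ *ᵥ x))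
      = ∑ i, hA.eigenvalues i * ((Uᵀ *ᵥ x) i)^2 := by
        simp [dotProduct, mulVec_diagonal]
        exact Finset.sum_congr rfl fun i _ => by ring
    _ ≤ ∑ i, (⨆ j, hA.eigenvalues j) * ((Uᵀ *ᵥ x) i)^2 := by
        apply Finset.sum_le_sum
        intro i _
        exact mul_le_mul_of_nonneg_right (le_ciSup hbdd i) (sq_nonneg _)
    _ = ⨆ j, hA.eigenvalues j := by
        rw [← Finset.mul_sum]
        have h3 : ∑ i, ((Uᵀ *ᵥ x) i)^2 = 1 := by
          rw [← h2]; simp [dotProduct, sq]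
        rw [h3, mul_one]

lemma eig_unit {r : ℕ} {A : Matrix (Fin r) (Fin r) ℝ} (hA : A.IsHermitian) (i : Fin r) :
    ⇑(hA.eigenvectorBasis i) ⬝ᵥ ⇑(hA.eigenvectorBasis i) = 1 := by
  have h := orthonormal_iff_ite.mp hA.eigenvectorBasis.orthonormal i i
  simp only [if_pos rfl] at h
  rw [EuclideanSpace.inner_eq_star_dotProduct] at h
  simpa [dotProduct] using h

lemma eig_eq_quad {r : ℕ} {A : Matrix (Fin r) (Fin r) ℝ} (hA : A.IsHermitian) (i : Fin r) :
    hA.eigenvalues i = ⇑(hA.eigenvectorBasis i) ⬝ᵥ (A *ᵥ ⇑(hA.eigenvectorBasis i)) := by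
  have := hA.eigenvalues_eq i
  simpa using this

lemma dot_diag_mulVec {n : ℕ} (c u z : Fin n → ℝ) :
    u ⬝ᵥ (Matrix.diagonal c *ᵥ z) = (fun i => c i * u i) ⬝ᵥ z := by
  simp only [dotProduct, mulVec_diagonal]
  exact Finset.sum_congr rfl fun i _ => by ring

lemma diag_mulVec {n : ℕ} (c u : Fin n → ℝ) :
    Matrix.diagonal c *ᵥ u = fun i => c i * u i := by
  ext i; simp [mulVec_diagonal]

lemma quad_expand {N r : ℕ} (T w : Fin N → ℝ) (P : Matrix (Fin N) (Fin r) ℝ)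
    (G : Matrix (Fin N) (Fin N) ℝ) (x : Fin r → ℝ) :
    x ⬝ᵥ ((Pᵀ * Matrix.diagonal (fun i => T i * w i - 1) * G *
        Matrix.diagonal (fun i => T i * w i - 1) * P) *ᵥ x)
      = (fun i => (T i * w i - 1) * (P *ᵥ x) i) ⬝ᵥ
        (G *ᵥ fun i => (T i * w i - 1) * (P *ᵥ x) i) := by
  rw [← mulVec_mulVec, ← mulVec_mulVec, ← mulVec_mulVec, ← mulVec_mulVec,
    dotProduct_mulVec, vecMul_transpose, dot_diag_mulVec, diag_mulVec]


/-- convexity in `w` of the maximum eigenvalue of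
`Q(w) = (1/N) Pᵀ diag(T∘w − 1) G_h diag(T∘w − 1) P − N λ₁ D⁻¹`. -/
theorem max_eigenvalue_objective_convex
    (N r : ℕ) (hr : 0 < r)
    (T : Fin N → ℝ) (hT : ∀ i, T i = 0 ∨ T i = 1)
    (P : Matrix (Fin N) (Fin r) ℝ)
    (d : Fin r → ℝ) (hd : ∀ i, 0 < d i)
    (D : Matrix (Fin r) (Fin r) ℝ) (hD : D = Matrix.diagonal d)
    (G : Matrix (Fin N) (Fin N) ℝ) (hG : G.PosSemidef)
    (lam₁ : ℝ) (hlam₁ : 0 < lam₁) (hN : 0 < N)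
    (Q : (Fin N → ℝ) → Matrix (Fin r) (Fin r) ℝ)
    (hQ : ∀ w, Q w =
      (1 / (N : ℝ)) •
        (Pᵀ * Matrix.diagonal (fun i => T i * w i - 1) * G *
          Matrix.diagonal (fun i => T i * w i - 1) * P)
        - ((N : ℝ) * lam₁) • D⁻¹)
    (hherm : ∀ w, (Q w).IsHermitian) :
    ConvexOn ℝ Set.univ (fun w => ⨆ i, (hherm w).eigenvalues i) := by
  haveI : Nonempty (Fin r) := ⟨⟨0, hr⟩⟩
  -- quadratic form of Q w
  have hquad : ∀ (w : Fin N → ℝ) (x : Fin r → ℝ),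
      x ⬝ᵥ (Q w *ᵥ x) =
        (1 / (N : ℝ)) * ((fun i => (T i * w i - 1) * (P *ᵥ x) i) ⬝ᵥ
          (G *ᵥ fun i => (T i * w i - 1) * (P *ᵥ x) i))
        - ((N : ℝ) * lam₁) * (x ⬝ᵥ (D⁻¹ *ᵥ x)) := by
    intro w x
    rw [hQ w, sub_mulVec, smul_mulVec, smul_mulVec, dotProduct_sub,
      dotProduct_smul, dotProduct_smul, smul_eq_mul, smul_eq_mul, quad_expand]
  -- convexity of each quadratic form
  have hgconv : ∀ (w₁ w₂ : Fin N → ℝ) (x : Fin r → ℝ) {a b : ℝ}, 0 ≤ a → 0 ≤ b → a + b = 1 →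
      x ⬝ᵥ (Q (a • w₁ + b • w₂) *ᵥ x) ≤ a * (x ⬝ᵥ (Q w₁ *ᵥ x)) + b * (x ⬝ᵥ (Q w₂ *ᵥ x)) := by
    intro w₁ w₂ x a b ha hb hab
    have hb1 : b = 1 - a := by linarith
    subst hb1
    rw [hquad, hquad, hquad]
    have hv : (fun i => (T i * (a • w₁ + (1-a) • w₂) i - 1) * (P *ᵥ x) i)
        = a • (fun i => (T i * w₁ i - 1) * (P *ᵥ x) i)
          + (1-a) • (fun i => (T i * w₂ i - 1) * (P *ᵥ x) i) := by
      funext i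
      simp only [Pi.add_apply, Pi.smul_apply, smul_eq_mul]
      ring
    rw [hv]
    have hps := psd_quad_ineq hG (fun i => (T i * w₁ i - 1) * (P *ᵥ x) i)
      (fun i => (T i * w₂ i - 1) * (P *ᵥ x) i) ha hb hab
    have hNn : (0:ℝ) ≤ 1 / (N:ℝ) := by positivity
    linarith [mul_le_mul_of_nonneg_left hps hNn]
  constructor
  · exact convex_univ
  · intro w₁ _ w₂ _ a b ha hb hab
    simp only [smul_eq_mul]
    apply ciSup_le
    intro i
    have hx1 : ⇑((hherm (a • w₁ + b • w₂)).eigenvectorBasis i) ⬝ᵥ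
        ⇑((hherm (a • w₁ + b • w₂)).eigenvectorBasis i) = 1 := eig_unit _ i
    rw [eig_eq_quad (hherm (a • w₁ + b • w₂)) i]
    calc _ ≤ a * (⇑((hherm (a • w₁ + b • w₂)).eigenvectorBasis i) ⬝ᵥ
              (Q w₁ *ᵥ ⇑((hherm (a • w₁ + b • w₂)).eigenvectorBasis i)))
            + b * (⇑((hherm (a • w₁ + b • w₂)).eigenvectorBasis i) ⬝ᵥ
              (Q w₂ *ᵥ ⇑((hherm (a • w₁ + b • w₂)).eigenvectorBasis i))) :=
        hgconv w₁ w₂ _ ha hb hab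
      _ ≤ a * (⨆ j, (hherm w₁).eigenvalues j) + b * (⨆ j, (hherm w₂).eigenvalues j) := by
        gcongr
        · exact rayleigh_le hr (hherm w₁) _ hx1
        · exact rayleigh_le hr (hherm w₂) _ hx1
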